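/- arXiv:2205.08286 — 3 statements merged into one kernel-verified Lean document; each statement's English description precedes it below -/
import Mathlib

section
/- Let X and Y be integrable random variables on a probability space with E|XY| < ∞. Let 𝒢¹, 𝒢² and 𝒢 be sub-σ-algebras such that 𝒢¹ ⊆ 𝒢, 𝒢² is independent of 𝒢, X is 𝒢-measurable, and Y is independent of σ(𝒢, 𝒢²). Then E(XY | σ(𝒢¹, 𝒢²)) = E(X | 𝒢¹) · E(Y) almost surely. -/
open MeasureTheory ProbabilityTheory MeasurableSpace Set

/-!
Since `σ(𝒢¹, 𝒢²) ⊆ σ(𝒢, 𝒢²)`, the tower property and pulling out the `σ(𝒢, 𝒢²)`-measurable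
factor `X` give `E(XY | σ(𝒢¹, 𝒢²)) = E(X · E(Y | σ(𝒢, 𝒢²)) | σ(𝒢¹, 𝒢²)) = E(Y) · E(X | σ(𝒢¹, 𝒢²))`.
It remains to drop `𝒢²`: for `s ∈ 𝒢¹` and `t ∈ 𝒢²`, independence of `𝒢²` from `𝒢` factors
`∫_{s ∩ t} Z = P(t) ∫_s Z` for both `Z = X` and `Z = E(X | 𝒢¹)`, so the integrals of these two
agree on the π-system `{s ∩ t}` generating `σ(𝒢¹, 𝒢²)`, hence on all of `σ(𝒢¹, 𝒢²)`.
-/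

theorem IsPiSystem.image2_inter {Ω : Type*} {C D : Set (Set Ω)} (hC : IsPiSystem C)
    (hD : IsPiSystem D) : IsPiSystem (image2 (· ∩ ·) C D) := by
  rintro _ ⟨s₁, hs₁, s₂, hs₂, rfl⟩ _ ⟨t₁, ht₁, t₂, ht₂, rfl⟩ hne
  rw [inter_inter_inter_comm] at hne ⊢
  exact mem_image2_of_mem (hC _ hs₁ _ ht₁ hne.left) (hD _ hs₂ _ ht₂ hne.right)

theorem MeasurableSpace.sup_eq_generateFrom_image2_inter {Ω : Type*}
    (m₁ m₂ : MeasurableSpace Ω) :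
    m₁ ⊔ m₂ =
      generateFrom (image2 (· ∩ ·) {s | MeasurableSet[m₁] s} {t | MeasurableSet[m₂] t}) := by
  refine le_antisymm (sup_le ?_ ?_) (generateFrom_le ?_)
  · exact fun s hs => measurableSet_generateFrom ⟨s, hs, univ, MeasurableSet.univ, inter_univ s⟩
  · exact fun t ht => measurableSet_generateFrom ⟨univ, MeasurableSet.univ, t, ht, univ_inter t⟩
  · rintro _ ⟨s, hs, t, ht, rfl⟩
    exact (le_sup_left (b := m₂) _ hs).inter (le_sup_right (a := m₁) _ ht)

theorem ProbabilityTheory.Indep.comap_congr {Ω β : Type*} [mβ : MeasurableSpace β]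
    {m mΩ : MeasurableSpace Ω} {μ : Measure Ω} {f g : Ω → β}
    (hind : Indep (MeasurableSpace.comap f mβ) m μ) (hfg : f =ᵐ[μ] g) :
    Indep (MeasurableSpace.comap g mβ) m μ := by
  rw [Indep_iff] at hind ⊢
  rintro _ t ⟨B, hB, rfl⟩ ht
  rw [measure_congr ((hfg.preimage B).symm.inter (ae_eq_refl t)),
    measure_congr (hfg.preimage B).symm]
  exact hind _ t ⟨B, hB, rfl⟩ ht

section

variable {Ω E : Type*} [NormedAddCommGroup E] [NormedSpace ℝ E]
  {m m₀ : MeasurableSpace Ω} {μ : Measure Ω} {f g : Ω → E}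

theorem setIntegral_eq_of_isPiSystem (hm : m ≤ m₀) {S : Set (Set Ω)} (hmS : m = generateFrom S)
    (hS : IsPiSystem S) (hf : Integrable f μ) (hg : Integrable g μ)
    (h_univ : ∫ x, f x ∂μ = ∫ x, g x ∂μ) (h_basic : ∀ s ∈ S, ∫ x in s, f x ∂μ = ∫ x in s, g x ∂μ)
    {s : Set Ω} (hs : MeasurableSet[m] s) : ∫ x in s, f x ∂μ = ∫ x in s, g x ∂μ := by
  induction s, hs using induction_on_inter hmS hS with
  | empty => simp
  | basic s hs => exact h_basic s hs
  | compl s hs ih =>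
    rw [setIntegral_compl (hm s hs) hf, setIntegral_compl (hm s hs) hg, ih, h_univ]
  | iUnion s hdisj hs ih =>
    rw [integral_iUnion (fun i => hm _ (hs i)) hdisj hf.integrableOn,
      integral_iUnion (fun i => hm _ (hs i)) hdisj hg.integrableOn]
    exact tsum_congr ih

variable [CompleteSpace E] [IsFiniteMeasure μ] {m₁ m₂ : MeasurableSpace Ω}

theorem setIntegral_inter_eq_measureReal_smul_of_indep (hm₁ : m₁ ≤ m₀) (hm₂ : m₂ ≤ m₀)
    (hind : Indep m₁ m₂ μ) (hf : StronglyMeasurable[m₁] f) (hfi : Integrable f μ)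
    {s t : Set Ω} (hs : MeasurableSet[m₁] s) (ht : MeasurableSet[m₂] t) :
    ∫ x in s ∩ t, f x ∂μ = μ.real t • ∫ x in s, f x ∂μ := by
  have h_const : μ[s.indicator f | m₂] =ᵐ[μ] fun _ => ∫ x, s.indicator f x ∂μ :=
    condExp_indep_eq hm₁ hm₂ (hf.indicator hs) hind
  calc ∫ x in s ∩ t, f x ∂μ = ∫ x in t, s.indicator f x ∂μ := by
        rw [setIntegral_indicator (hm₁ s hs), inter_comm]
    _ = ∫ x in t, μ[s.indicator f | m₂] x ∂μ :=
        (setIntegral_condExp hm₂ (hfi.indicator (hm₁ s hs)) ht).symm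
    _ = μ.real t • ∫ x in s, f x ∂μ := by
        rw [setIntegral_congr_ae (hm₂ t ht) (h_const.mono fun _ h _ => h), setIntegral_const,
          integral_indicator (hm₁ s hs)]

theorem condExp_sup_eq_of_indep {m' : MeasurableSpace Ω} (hm₁m' : m₁ ≤ m') (hm' : m' ≤ m₀)
    (hm₂ : m₂ ≤ m₀) (hind : Indep m' m₂ μ) (hf : StronglyMeasurable[m'] f) (hfi : Integrable f μ) :
    μ[f | m₁ ⊔ m₂] =ᵐ[μ] μ[f | m₁] := by
  have hm₁ : m₁ ≤ m₀ := hm₁m'.trans hm'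
  have hcond : StronglyMeasurable[m'] (μ[f | m₁]) := stronglyMeasurable_condExp.mono hm₁m'
  refine (ae_eq_condExp_of_forall_setIntegral_eq (sup_le hm₁ hm₂) hfi
    (fun _ _ _ => integrable_condExp.integrableOn) (fun u hu _ => ?_)
    (stronglyMeasurable_condExp.mono (le_sup_left : m₁ ≤ m₁ ⊔ m₂)).aestronglyMeasurable).symm
  refine setIntegral_eq_of_isPiSystem (sup_le hm₁ hm₂) (sup_eq_generateFrom_image2_inter m₁ m₂)
    ((@isPiSystem_measurableSet Ω m₁).image2_inter (@isPiSystem_measurableSet Ω m₂))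
    integrable_condExp hfi (integral_condExp hm₁) ?_ hu
  rintro _ ⟨s, hs, t, ht, rfl⟩
  rw [setIntegral_inter_eq_measureReal_smul_of_indep hm' hm₂ hind hcond integrable_condExp
      (hm₁m' s hs) ht, setIntegral_inter_eq_measureReal_smul_of_indep hm' hm₂ hind hf hfi
      (hm₁m' s hs) ht, setIntegral_condExp hm₁ hfi hs]

end

theorem stmt_0_general {Ω : Type*} {m : MeasurableSpace Ω} (μ : Measure Ω) [IsProbabilityMeasure μ]
    (G1 G2 G : MeasurableSpace Ω) (hG1G : G1 ≤ G) (hGm : G ≤ m)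
    (hG2m : G2 ≤ m)
    (X Y : Ω → ℝ)
    (hX : Integrable X μ) (hY : Integrable Y μ)
    (hXY : Integrable (fun ω => X ω * Y ω) μ)
    (hXmeas : Measurable[G] X)
    (hG2indep : Indep G2 G μ)
    (hYindep : Indep (MeasurableSpace.comap Y inferInstance) (G ⊔ G2) μ) :
    μ[fun ω => X ω * Y ω | G1 ⊔ G2] =ᵐ[μ]
      fun ω => (μ[X | G1]) ω * ∫ ω', Y ω' ∂μ := by
  have hGG2 : G ⊔ G2 ≤ m := sup_le hGm hG2m
  have hY_const : μ[Y | G ⊔ G2] =ᵐ[μ] fun _ => ∫ ω, Y ω ∂μ :=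
    -- `Y` is only a.e. measurable; independence passes to a measurable version of it.
    let Y' := hY.1.mk Y
    have hYY' : Y =ᵐ[μ] Y' := hY.1.ae_eq_mk
    have hY' : Measurable[m] Y' := hY.1.stronglyMeasurable_mk.measurable
    calc μ[Y | G ⊔ G2] =ᵐ[μ] μ[Y' | G ⊔ G2] := condExp_congr_ae hYY'
      _ =ᵐ[μ] fun _ => ∫ ω, Y' ω ∂μ :=
          condExp_indep_eq hY'.comap_le hGG2 (comap_measurable Y').stronglyMeasurable
            (hYindep.comap_congr hYY')
      _ = fun _ => ∫ ω, Y ω ∂μ := by rw [integral_congr_ae hYY']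
  have h_pull : μ[X * Y | G ⊔ G2] =ᵐ[μ] X * μ[Y | G ⊔ G2] :=
    condExp_mul_of_stronglyMeasurable_left (hXmeas.stronglyMeasurable.mono le_sup_left) hXY hY
  calc μ[X * Y | G1 ⊔ G2] =ᵐ[μ] μ[μ[X * Y | G ⊔ G2] | G1 ⊔ G2] :=
        (condExp_condExp_of_le (sup_le_sup_right hG1G G2) hGG2).symm
    _ =ᵐ[μ] μ[(∫ ω, Y ω ∂μ) • X | G1 ⊔ G2] := by
        refine condExp_congr_ae (h_pull.trans ?_)
        filter_upwards [hY_const] with ω hω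
        simp [hω, mul_comm]
    _ =ᵐ[μ] (∫ ω, Y ω ∂μ) • μ[X | G1 ⊔ G2] := condExp_smul _ _ _
    _ =ᵐ[μ] fun ω => (μ[X | G1]) ω * ∫ ω', Y ω' ∂μ := by
        filter_upwards [condExp_sup_eq_of_indep hG1G hGm hG2m hG2indep.symm
          hXmeas.stronglyMeasurable hX] with ω hω
        simp [hω, mul_comm]

/-- Conditional product lemma: if `𝒢¹ ⊆ 𝒢`, `𝒢²` is independent of `𝒢`, `X` is
`𝒢`-measurable and `Y` is independent of `σ(𝒢, 𝒢²)`, then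
`E(XY | σ(𝒢¹, 𝒢²)) = E(X | 𝒢¹) · E Y` a.s. -/
theorem stmt_0 {Ω : Type*} {m : MeasurableSpace Ω} (μ : Measure Ω) [IsProbabilityMeasure μ]
    (G1 G2 G : MeasurableSpace Ω) (hG1G : G1 ≤ G) (hGm : G ≤ m) (hG1m : G1 ≤ m)
    (hG2m : G2 ≤ m)
    (X Y : Ω → ℝ)
    (hX : Integrable X μ) (hY : Integrable Y μ)
    (hXY : Integrable (fun ω => X ω * Y ω) μ)
    (hXmeas : Measurable[G] X)
    (hG2indep : Indep G2 G μ)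
    (hYindep : Indep (MeasurableSpace.comap Y inferInstance) (G ⊔ G2) μ) :
    μ[fun ω => X ω * Y ω | G1 ⊔ G2] =ᵐ[μ]
      fun ω => (μ[X | G1]) ω * ∫ ω', Y ω' ∂μ :=
  stmt_0_general μ G1 G2 G hG1G hGm hG2m X Y hX hY hXY hXmeas hG2indep hYindep
end

section
/- Under the same hypotheses (𝒢¹ ⊆ 𝒢, 𝒢² independent of 𝒢, X integrable and 𝒢-measurable, Y integrable and independent of σ(𝒢, 𝒢²), XY integrable), for every set G = G₁ ∩ G₂ with G₁ ∈ 𝒢¹ and G₂ ∈ 𝒢², one has E(XY·1_G) = E(Y)·E(E(X|𝒢¹)·1_G). -/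
/-!
Both sides are computed with one identity: if `F` is independent of a σ-algebra `𝓜` and
`S ∈ 𝓜`, `H` is `𝓜`-measurable, then `∫_S H F = E(F) ∫_S H`. With `F = Y` and `𝓜 = 𝒢 ∨ 𝒢²`
it gives `E(XY 1_G) = E(Y) ∫_{G₁ ∩ G₂} X`. With `F = 1_{G₂}` and `𝓜 = 𝒢` it gives
`∫_{G₁ ∩ G₂} Z = P(G₂) ∫_{G₁} Z` for every `𝒢`-measurable `Z`, in particular for `X` and
`E(X|𝒢¹)`, whose integrals over `G₁ ∈ 𝒢¹` agree.
-/

open MeasureTheory ProbabilityTheory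

theorem setIntegral_mul_eq_integral_mul_setIntegral {Ω : Type*} {𝓜 m : MeasurableSpace Ω}
    {μ : Measure Ω} {F H : Ω → ℝ} {S : Set Ω} (h𝓜 : 𝓜 ≤ m)
    (hF : AEStronglyMeasurable F μ) (hH : Measurable[𝓜] H) (hS : MeasurableSet[𝓜] S)
    (hindep : Indep (MeasurableSpace.comap F inferInstance) 𝓜 μ) :
    ∫ ω in S, H ω * F ω ∂μ = (∫ ω, F ω ∂μ) * ∫ ω in S, H ω ∂μ := by
  have hSH : Measurable[𝓜] (S.indicator H) := hH.indicator hS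
  have hindepFun : IndepFun F (S.indicator H) μ :=
    indep_of_indep_of_le_right hindep hSH.comap_le
  calc ∫ ω in S, H ω * F ω ∂μ = ∫ ω, S.indicator H ω * F ω ∂μ := by
        simp only [← integral_indicator (h𝓜 _ hS), Set.indicator_mul_left]
    _ = (∫ ω, S.indicator H ω ∂μ) * ∫ ω, F ω ∂μ :=
        hindepFun.symm.integral_fun_mul_eq_mul_integral
          (hSH.mono h𝓜 le_rfl).aestronglyMeasurable hF
    _ = (∫ ω, F ω ∂μ) * ∫ ω in S, H ω ∂μ := by rw [integral_indicator (h𝓜 _ hS), mul_comm]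

theorem setIntegral_inter_eq_measureReal_mul_setIntegral {Ω : Type*} {𝓜 𝓝 m : MeasurableSpace Ω}
    {μ : Measure Ω} {Z : Ω → ℝ} {A B : Set Ω} (h𝓜 : 𝓜 ≤ m) (h𝓝 : 𝓝 ≤ m)
    (hindep : Indep 𝓝 𝓜 μ) (hZ : Measurable[𝓜] Z) (hA : MeasurableSet[𝓜] A)
    (hB : MeasurableSet[𝓝] B) :
    ∫ ω in A ∩ B, Z ω ∂μ = μ.real B * ∫ ω in A, Z ω ∂μ := by
  have hBm : MeasurableSet[m] B := h𝓝 _ hB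
  have h1B : Measurable[𝓝] (B.indicator (1 : Ω → ℝ)) := measurable_const.indicator hB
  have key := setIntegral_mul_eq_integral_mul_setIntegral h𝓜
    (h1B.mono h𝓝 le_rfl).aestronglyMeasurable hZ hA
    (indep_of_indep_of_le_left hindep h1B.comap_le)
  simp only [← Set.indicator_mul_right, Pi.one_apply, mul_one] at key
  rwa [integral_indicator_one hBm, setIntegral_indicator hBm] at key

theorem stmt_1_general {Ω : Type*} {m : MeasurableSpace Ω} (μ : Measure Ω) [IsProbabilityMeasure μ]
    (G1 G2 G : MeasurableSpace Ω) (hG1G : G1 ≤ G) (hGm : G ≤ m)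
    (hG2m : G2 ≤ m)
    (X Y : Ω → ℝ)
    (hX : Integrable X μ) (hY : Integrable Y μ)
    (hXmeas : Measurable[G] X)
    (hG2indep : Indep G2 G μ)
    (hYindep : Indep (MeasurableSpace.comap Y inferInstance) (G ⊔ G2) μ) :
    ∀ A B : Set Ω, MeasurableSet[G1] A → MeasurableSet[G2] B →
      ∫ ω in A ∩ B, X ω * Y ω ∂μ
        = (∫ ω, Y ω ∂μ) * ∫ ω in A ∩ B, (μ[X | G1]) ω ∂μ := by
  intro A B hA hB
  have hAG : MeasurableSet[G] A := hG1G _ hA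
  have hAB : MeasurableSet[G ⊔ G2] (A ∩ B) :=
    (le_sup_left (b := G2) _ hAG).inter (le_sup_right (a := G) _ hB)
  have hCE : Measurable[G] (μ[X | G1]) := stronglyMeasurable_condExp.measurable.mono hG1G le_rfl
  rw [setIntegral_mul_eq_integral_mul_setIntegral (sup_le hGm hG2m) hY.aestronglyMeasurable
      (hXmeas.mono le_sup_left le_rfl) hAB hYindep,
    setIntegral_inter_eq_measureReal_mul_setIntegral hGm hG2m hG2indep hXmeas hAG hB,
    setIntegral_inter_eq_measureReal_mul_setIntegral hGm hG2m hG2indep hCE hAG hB,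
    setIntegral_condExp (hG1G.trans hGm) hX hA]

/-- Under the hypotheses of the conditional product lemma, for every
`G = G₁ ∩ G₂` with `G₁ ∈ 𝒢¹`, `G₂ ∈ 𝒢²`,
`E(XY·1_G) = E(Y) · E(E(X|𝒢¹)·1_G)`. -/
theorem stmt_1 {Ω : Type*} {m : MeasurableSpace Ω} (μ : Measure Ω) [IsProbabilityMeasure μ]
    (G1 G2 G : MeasurableSpace Ω) (hG1G : G1 ≤ G) (hGm : G ≤ m) (hG1m : G1 ≤ m)
    (hG2m : G2 ≤ m)
    (X Y : Ω → ℝ)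
    (hX : Integrable X μ) (hY : Integrable Y μ)
    (hXY : Integrable (fun ω => X ω * Y ω) μ)
    (hXmeas : Measurable[G] X)
    (hG2indep : Indep G2 G μ)
    (hYindep : Indep (MeasurableSpace.comap Y inferInstance) (G ⊔ G2) μ) :
    ∀ A B : Set Ω, MeasurableSet[G1] A → MeasurableSet[G2] B →
      ∫ ω in A ∩ B, X ω * Y ω ∂μ
        = (∫ ω, Y ω ∂μ) * ∫ ω in A ∩ B, (μ[X | G1]) ω ∂μ :=
  stmt_1_general μ G1 G2 G hG1G hGm hG2m X Y hX hY hXmeas hG2indep hYindep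
end

section
/- Let f be a random variable on a probability space (Ω, ℱ, P) and 𝒢 ⊆ ℱ a sub-σ-algebra. Then the extended conditional expectation E(|f| | 𝒢) is almost surely finite if and only if f is σ-integrable relative to 𝒢, i.e., there exists an increasing sequence of sets Ωₙ ∈ 𝒢 with ⋃ₙ Ωₙ = Ω and E(|f|·1_{Ωₙ}) < ∞ for all n. -/
open MeasureTheory
open scoped ENNReal

/-- The extended conditional expectation `E(|f| | 𝒢)`, realized as the increasing
limit of the conditional expectations of the truncations `|f| ∧ n`, is a.s. finite
iff `f` is σ-integrable relative to `𝒢`. -/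
theorem stmt_2 {Ω : Type*} (G : MeasurableSpace Ω) {m : MeasurableSpace Ω} (μ : Measure Ω) [IsProbabilityMeasure μ]
    (hG : G ≤ m) (f : Ω → ℝ) (hf : Measurable f) :
    (∀ᵐ ω ∂μ, (⨆ n : ℕ, ENNReal.ofReal ((μ[fun ω' => min |f ω'| (n : ℝ) | G]) ω)) < ⊤) ↔
      ∃ Ωn : ℕ → Set Ω, Monotone Ωn ∧ (∀ n, MeasurableSet[G] (Ωn n)) ∧
        (⋃ n, Ωn n) = Set.univ ∧ ∀ n, Integrable ((Ωn n).indicator f) μ := by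
  letI : MeasurableSpace Ω := m
  have hfm : Measurable[m] f := hf
  have hint : ∀ n : ℕ, Integrable (fun ω' => min |f ω'| (n : ℝ)) μ := by
    intro n
    refine Integrable.mono' (integrable_const (n : ℝ))
      ((hfm.abs.min (measurable_const (a := (n:ℝ)))).aestronglyMeasurable (μ := μ)) ?_
    filter_upwards with ω
    rw [Real.norm_eq_abs, abs_of_nonneg (le_min (abs_nonneg _) n.cast_nonneg)]
    exact min_le_right _ _
  set g : Ω → ℝ≥0∞ :=
    fun ω => ⨆ n : ℕ, ENNReal.ofReal ((μ[fun ω' => min |f ω'| (n : ℝ) | G]) ω) with hg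
  have hgmeas : Measurable[G] g :=
    Measurable.iSup fun n => (stronglyMeasurable_condExp.measurable).ennreal_ofReal
  constructor
  · intro h
    set N : Set Ω := {ω | g ω = ⊤} with hN
    have hNmeas : MeasurableSet[G] N := hgmeas (measurableSet_singleton ⊤)
    have hNnull : μ N = 0 := by
      have : N = {ω | ¬ g ω < ⊤} := by
        ext ω; simp [hN, lt_top_iff_ne_top]
      rw [this]
      exact h
    refine ⟨fun n => {ω | g ω ≤ n} ∪ N, ?_, ?_, ?_, ?_⟩
    · intro a b hab ω hω
      refine hω.imp (fun h' => ?_) id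
      exact Set.mem_setOf.mpr ((Set.mem_setOf.mp h').trans (Nat.cast_le.2 hab))
    · intro n
      exact (hgmeas measurableSet_Iic).union hNmeas
    · ext ω
      simp only [Set.mem_iUnion, Set.mem_univ, iff_true]
      by_cases hω : g ω = ⊤
      · exact ⟨0, Or.inr hω⟩
      · obtain ⟨n, hn⟩ := ENNReal.exists_nat_gt hω
        exact ⟨n, Or.inl hn.le⟩
    · intro n
      show Integrable (({ω | g ω ≤ (n : ℝ≥0∞)} ∪ N).indicator f) μ
      set A : Set Ω := {ω | g ω ≤ (n : ℝ≥0∞)} with hA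
      have hAG : MeasurableSet[G] A := hgmeas measurableSet_Iic
      have hAm : MeasurableSet[m] A := hG _ hAG
      have hNm : MeasurableSet[m] N := hG _ hNmeas
      have hUm : MeasurableSet[m] (A ∪ N) := hAm.union hNm
      suffices hIOn : IntegrableOn f (A ∪ N) μ by
        exact (integrable_indicator_iff hUm).mpr hIOn
      refine IntegrableOn.union ?_ ?_
      swap
      · rw [IntegrableOn, Measure.restrict_eq_zero.mpr hNnull]
        exact integrable_zero_measure
      refine ⟨hfm.aestronglyMeasurable.restrict, ?_⟩
      rw [hasFiniteIntegral_iff_norm]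
      have hpt : ∀ ω, (⨆ k : ℕ, ENNReal.ofReal (min |f ω| (k : ℝ))) = ENNReal.ofReal ‖f ω‖ := by
        intro ω
        refine le_antisymm (iSup_le fun k => ENNReal.ofReal_le_ofReal
          (by rw [Real.norm_eq_abs]; exact min_le_left _ _)) ?_
        calc ENNReal.ofReal ‖f ω‖ = ENNReal.ofReal (min |f ω| (⌈|f ω|⌉₊ : ℝ)) := by
              rw [min_eq_left (Nat.le_ceil _), Real.norm_eq_abs]
          _ ≤ _ := le_iSup (fun k : ℕ => ENNReal.ofReal (min |f ω| (k : ℝ))) ⌈|f ω|⌉₊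
      calc ∫⁻ ω, ENNReal.ofReal ‖f ω‖ ∂μ.restrict A
          = ∫⁻ ω, ⨆ k : ℕ, ENNReal.ofReal (min |f ω| (k : ℝ)) ∂μ.restrict A := by
            simp_rw [hpt]
        _ = ⨆ k : ℕ, ∫⁻ ω, ENNReal.ofReal (min |f ω| (k : ℝ)) ∂μ.restrict A := by
            refine lintegral_iSup (fun k => ((hfm.abs.min measurable_const).ennreal_ofReal)) ?_
            intro a b hab ω
            exact ENNReal.ofReal_le_ofReal (min_le_min le_rfl (by exact_mod_cast Nat.cast_le.2 hab))
        _ ≤ ENNReal.ofReal n := by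
            refine iSup_le fun k => ?_
            rw [← ofReal_integral_eq_lintegral_ofReal ((hint k).restrict)
              (ae_of_all _ fun ω => le_min (abs_nonneg _) k.cast_nonneg)]
            refine ENNReal.ofReal_le_ofReal ?_
            rw [← setIntegral_condExp hG (hint k) hAG]
            have hle : ∀ ω ∈ A, (μ[fun ω' => min |f ω'| (k : ℝ) | G]) ω ≤ (n : ℝ) := by
              intro ω hω
              have h1 : ENNReal.ofReal ((μ[fun ω' => min |f ω'| (k : ℝ) | G]) ω) ≤ (n : ℝ≥0∞) :=
                le_trans (le_iSup (fun j : ℕ =>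
                  ENNReal.ofReal ((μ[fun ω' => min |f ω'| (j : ℝ) | G]) ω)) k) hω
              rw [← ENNReal.ofReal_natCast n] at h1
              exact (ENNReal.ofReal_le_ofReal_iff n.cast_nonneg).mp h1
            calc ∫ ω in A, (μ[fun ω' => min |f ω'| (k : ℝ) | G]) ω ∂μ
                ≤ ∫ _ω in A, (n : ℝ) ∂μ :=
                  setIntegral_mono_on integrable_condExp.integrableOn
                    (integrable_const _).integrableOn hAm hle
              _ = (μ A).toReal * n := by rw [setIntegral_const, smul_eq_mul, Measure.real]
              _ ≤ 1 * n := by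
                  refine mul_le_mul_of_nonneg_right ?_ n.cast_nonneg
                  exact ENNReal.toReal_le_of_le_ofReal zero_le_one (by simp [prob_le_one])
              _ = n := one_mul _
        _ < ⊤ := ENNReal.ofReal_lt_top
  · rintro ⟨Ωn, hmono, hmeasG, hcover, hintg⟩
    have key : ∀ n : ℕ, ∀ᵐ ω ∂μ, ω ∈ Ωn n → g ω < ⊤ := by
      intro n
      set s := Ωn n with hs
      have hfs : Integrable (s.indicator (fun ω => |f ω|)) μ := by
        refine (hintg n).abs.congr (ae_of_all _ fun ω => ?_)
        by_cases hω : ω ∈ s <;> (rw [hs] at hω; simp [Set.indicator, hω, hs])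
      have hbound : ∀ k : ℕ, ∀ᵐ ω ∂μ, ω ∈ s →
          (μ[fun ω' => min |f ω'| (k : ℝ) | G]) ω ≤ (μ[s.indicator (fun ω => |f ω|)|G]) ω := by
        intro k
        have h1 := condExp_indicator (m := G) (hint k) (hmeasG n)
        have h2 : μ[s.indicator (fun ω' => min |f ω'| (k : ℝ))|G]
            ≤ᵐ[μ] μ[s.indicator (fun ω => |f ω|)|G] := by
          have hsm : MeasurableSet[m] s := hG _ (hmeasG n)
          have hik : Integrable (s.indicator fun ω' => min |f ω'| (k : ℝ)) μ :=
            Integrable.indicator (hint k) hsm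
          refine condExp_mono hik hfs (ae_of_all _ fun ω => ?_)
          by_cases hω : ω ∈ s <;> simp [Set.indicator, hω, min_le_left]
        filter_upwards [h1, h2] with ω h1 h2 hωs
        calc (μ[fun ω' => min |f ω'| (k : ℝ) | G]) ω
            = s.indicator (μ[fun ω' => min |f ω'| (k : ℝ) | G]) ω :=
              (Set.indicator_of_mem hωs _).symm
          _ = (μ[s.indicator (fun ω' => min |f ω'| (k : ℝ))|G]) ω := h1.symm
          _ ≤ _ := h2
      have hall := ae_all_iff.mpr hbound
      filter_upwards [hall] with ω hω hωs
      calc g ω ≤ ENNReal.ofReal ((μ[s.indicator (fun ω => |f ω|)|G]) ω) :=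
          iSup_le fun k => ENNReal.ofReal_le_ofReal (hω k hωs)
        _ < ⊤ := ENNReal.ofReal_lt_top
    have hall := ae_all_iff.mpr key
    filter_upwards [hall] with ω hω
    obtain ⟨n, hn⟩ := Set.mem_iUnion.mp (hcover.symm.subset (Set.mem_univ ω))
    exact hω n hn
end
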